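/- arXiv:1502.04787 — 3 statements merged into one kernel-verified Lean document; each statement's English description precedes it below -/
import Mathlib

section
/- In the algebra of pseudo-differential operators over a commutative differential algebra, the product rule f∂^i · g∂^j = Σ_{r≥0} binom(i,r) f ∂^r(g) ∂^{i+j-r} is associative; i.e., (f∂^i · g∂^j) · h∂^k = f∂^i · (g∂^j · h∂^k) for all f,g,h in the algebra and integers i,j,k. -/
/-- Generalized binomial coefficient `binom(i,r) = i(i-1)⋯(i-r+1)/r!` for `i : ℤ`. -/
noncomputable def dbinom (i : ℤ) (r : ℕ) : ℚ :=
  (∏ k ∈ Finset.range r, ((i : ℚ) - k)) / (Nat.factorial r)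

/-- Product of pseudo-differential operators, represented by coefficient
functions `a : ℤ → A` (so `a` stands for `Σ_i a(i) ∂^i`), via the generalized
Leibniz rule `f∂^i · g∂^j = Σ_{r≥0} binom(i,r) f ∂^r(g) ∂^{i+j-r}`. -/
noncomputable def pdoMul {A : Type*} [CommRing A] [Algebra ℚ A]
    (δ : A → A) (a b : ℤ → A) : ℤ → A :=
  fun n => ∑ᶠ (i : ℤ), ∑ᶠ (r : ℕ), dbinom i r • (a i * δ^[r] (b (n - i + r)))

/-- The monomial `f ∂^i` as a coefficient function. -/
def mono {A : Type*} [Zero A] (f : A) (i : ℤ) : ℤ → A :=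
  fun n => if n = i then f else 0

open Finset

section dbinomLemmas

lemma descPochhammer_smeval_eq_prod (x : ℚ) (r : ℕ) :
    (descPochhammer ℤ r).smeval x = ∏ k ∈ range r, (x - k) := by
  induction r with
  | zero => simp [Polynomial.smeval_one]
  | succ r ih =>
    rw [descPochhammer_succ_right, Polynomial.smeval_mul, ih, prod_range_succ,
      Polynomial.smeval_sub, Polynomial.smeval_X, Polynomial.smeval_natCast]
    simp

lemma dbinom_eq_choose (x : ℤ) (r : ℕ) : dbinom x r = Ring.choose (x:ℚ) r := by
  have h := Ring.descPochhammer_eq_factorial_smul_choose (R := ℚ) (x:ℚ) r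
  rw [descPochhammer_smeval_eq_prod] at h
  rw [dbinom, h, nsmul_eq_mul, mul_div_assoc, mul_comm]
  field_simp

lemma dbinom_vandermonde (x y : ℤ) (m : ℕ) :
    ∑ t ∈ range (m+1), dbinom x t * dbinom y (m - t) = dbinom (x + y) m := by
  simp only [dbinom_eq_choose]
  rw [Int.cast_add, Ring.add_choose_eq _ (Commute.all _ _),
    Finset.Nat.sum_antidiagonal_eq_sum_range_succ_mk]

lemma dbinom_mul_choose {s r : ℕ} (hs : s ≤ r) (x : ℤ) :
    dbinom x r * (r.choose s : ℚ) = dbinom x s * dbinom (x - s) (r - s) := by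
  obtain ⟨t, rfl⟩ := Nat.exists_eq_add_of_le hs
  have hst : s + t - s = t := by omega
  rw [hst]
  unfold dbinom
  rw [Finset.prod_range_add]
  have h2 : ∏ k ∈ range t, ((x:ℚ) - ((s + k : ℕ):ℚ)) = ∏ k ∈ range t, (((x - s : ℤ):ℚ) - k) := by
    apply prod_congr rfl; intro k _; push_cast; ring
  rw [h2]
  have key : ((s+t).choose s : ℚ) * s.factorial * t.factorial = (s+t).factorial := by
    have := Nat.choose_mul_factorial_mul_factorial (Nat.le_add_right s t) (n := s + t)
    rw [hst] at this
    exact_mod_cast this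
  have hs0 : (s.factorial : ℚ) ≠ 0 := by exact_mod_cast s.factorial_ne_zero
  have ht0 : (t.factorial : ℚ) ≠ 0 := by exact_mod_cast t.factorial_ne_zero
  have hst0 : ((s+t).factorial : ℚ) ≠ 0 := by exact_mod_cast (s+t).factorial_ne_zero
  field_simp
  rw [← key]
  ring

lemma key_identity {s M : ℕ} (hs : s ≤ M) (i j : ℤ) :
    ∑ r ∈ range (M+1), dbinom i r * dbinom j (M - r) * (r.choose s : ℚ)
      = dbinom i s * dbinom (i + j - s) (M - s) := by
  have hM : M + 1 = s + (M - s + 1) := by omega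
  rw [hM, Finset.sum_range_add]
  have h1 : ∑ r ∈ range s, dbinom i r * dbinom j (M - r) * (r.choose s : ℚ) = 0 := by
    apply Finset.sum_eq_zero
    intro r hr
    rw [Nat.choose_eq_zero_of_lt (mem_range.mp hr)]
    simp
  rw [h1, zero_add]
  have h2 : ∀ t ∈ range (M - s + 1),
      dbinom i (s + t) * dbinom j (M - (s + t)) * (((s + t).choose s : ℕ) : ℚ)
        = dbinom i s * (dbinom (i - s) t * dbinom j ((M - s) - t)) := by
    intro t ht
    have e1 : dbinom i (s + t) * (((s + t).choose s : ℕ) : ℚ)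
        = dbinom i s * dbinom (i - s) t := by
      have := dbinom_mul_choose (Nat.le_add_right s t) i
      simpa [Nat.add_sub_cancel_left] using this
    have e2 : M - (s + t) = (M - s) - t := by omega
    rw [e2, mul_right_comm, e1]; ring
  rw [Finset.sum_congr rfl h2, ← Finset.mul_sum, dbinom_vandermonde]
  congr 2
  ring

end dbinomLemmas

section derLemmas

variable {A : Type*} [CommRing A] [Algebra ℚ A]

lemma d_iter_zero (d : Derivation ℚ A A) (r : ℕ) : (⇑d)^[r] 0 = 0 :=
  Function.iterate_fixed (map_zero d) r

lemma d_iter_smul (d : Derivation ℚ A A) (q : ℚ) (r : ℕ) (x : A) :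
    (⇑d)^[r] (q • x) = q • (⇑d)^[r] x := by
  induction r generalizing x with
  | zero => simp
  | succ r ih => simp [Function.iterate_succ_apply', ih, Derivation.map_smul]

lemma d_iter_mul (d : Derivation ℚ A A) (a b : A) (n : ℕ) :
    (⇑d)^[n] (a * b)
      = ∑ s ∈ range (n+1), ((n.choose s : ℚ)) • ((⇑d)^[s] a * (⇑d)^[n-s] b) := by
  induction n with
  | zero => simp
  | succ n ih =>
    rw [Function.iterate_succ_apply', ih, map_sum]
    have step : ∀ s, d (((n.choose s : ℚ)) • ((⇑d)^[s] a * (⇑d)^[n-s] b)) =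
        (n.choose s : ℚ) • ((⇑d)^[s+1] a * (⇑d)^[n-s] b)
        + (n.choose s : ℚ) • ((⇑d)^[s] a * (⇑d)^[n-s+1] b) := by
      intro s
      rw [Derivation.map_smul, Derivation.leibniz, smul_eq_mul, smul_eq_mul,
        Function.iterate_succ_apply', Function.iterate_succ_apply', smul_add]
      ring_nf
    simp only [step, Finset.sum_add_distrib]
    have e2 : ∑ s ∈ range (n+1), (n.choose s : ℚ) • ((⇑d)^[s] a * (⇑d)^[n-s+1] b)
        = ∑ s ∈ range (n+1), (n.choose s : ℚ) • ((⇑d)^[s] a * (⇑d)^[n+1-s] b) := by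
      apply Finset.sum_congr rfl
      intro s hs
      have : n - s + 1 = n + 1 - s := by
        have := Finset.mem_range.mp hs; omega
      rw [this]
    rw [e2]
    have e5 : ∑ s ∈ range (n+1), (n.choose s : ℚ) • ((⇑d)^[s] a * (⇑d)^[n+1-s] b)
        = ∑ s ∈ range (n+2), (n.choose s : ℚ) • ((⇑d)^[s] a * (⇑d)^[n+1-s] b) := by
      conv_rhs => rw [Finset.sum_range_succ]
      simp [Nat.choose_succ_self]
    have e4 : ∑ s ∈ range (n+2), (n.choose s : ℚ) • ((⇑d)^[s] a * (⇑d)^[n+1-s] b)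
        = ∑ s ∈ range (n+1), (n.choose (s+1) : ℚ) • ((⇑d)^[s+1] a * (⇑d)^[n-s] b)
          + (n.choose 0 : ℚ) • ((⇑d)^[0] a * (⇑d)^[n+1] b) := by
      rw [Finset.sum_range_succ']
      simp [Nat.succ_sub_succ]
    rw [Finset.sum_range_succ' (fun s => ((n+1).choose s : ℚ) • ((⇑d)^[s] a * (⇑d)^[n+1-s] b))]
    have e3 : ∀ s, (((n + 1).choose (s+1) : ℕ) : ℚ) • ((⇑d)^[s+1] a * (⇑d)^[n+1-(s+1)] b)
        = (n.choose s : ℚ) • ((⇑d)^[s+1] a * (⇑d)^[n-s] b)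
          + (n.choose (s+1) : ℚ) • ((⇑d)^[s+1] a * (⇑d)^[n-s] b) := by
      intro s
      have h1 : n + 1 - (s+1) = n - s := by omega
      rw [h1, Nat.choose_succ_succ]
      push_cast
      rw [add_smul]
    simp only [e3, Finset.sum_add_distrib]
    rw [e5, e4]
    simp [add_assoc]

end derLemmas

section pdoLemmas

variable {A : Type*} [CommRing A] [Algebra ℚ A]

lemma pdoMul_mono_right (d : Derivation ℚ A A) (a : ℤ → A) (h : A) (k n : ℤ) :
    pdoMul (⇑d) a (mono h k) n
      = ∑ᶠ m : ℤ, if 0 ≤ m + k - n then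
          dbinom m (m + k - n).toNat • (a m * (⇑d)^[(m + k - n).toNat] h) else 0 := by
  unfold pdoMul
  apply finsum_congr
  intro m
  by_cases hc : 0 ≤ m + k - n
  · rw [if_pos hc, finsum_eq_single _ ((m + k - n).toNat)]
    · have hj : n - m + ((m + k - n).toNat : ℤ) = k := by omega
      simp only [mono, if_pos hj]
    · intro r hr
      have hj : ¬ (n - m + (r:ℤ) = k) := by
        intro he; apply hr; omega
      simp only [mono, if_neg hj, d_iter_zero, mul_zero, smul_zero]
  · rw [if_neg hc]
    apply finsum_eq_zero_of_forall_eq_zero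
    intro r
    have hj : ¬ (n - m + (r:ℤ) = k) := by intro he; omega
    simp only [mono, if_neg hj, d_iter_zero, mul_zero, smul_zero]

lemma pdoMul_mono_left (d : Derivation ℚ A A) (f : A) (i : ℤ) (b : ℤ → A) (n : ℤ) :
    pdoMul (⇑d) (mono f i) b n
      = ∑ᶠ r : ℕ, dbinom i r • (f * (⇑d)^[r] (b (n - i + r))) := by
  unfold pdoMul
  rw [finsum_eq_single _ i]
  · simp [mono]
  · intro m hm
    simp only [mono, if_neg hm, zero_mul, smul_zero, finsum_zero]

lemma pdoMul_mono_mono (d : Derivation ℚ A A) (f g : A) (i j n : ℤ) :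
    pdoMul (⇑d) (mono f i) (mono g j) n
      = if 0 ≤ i + j - n then
          dbinom i (i + j - n).toNat • (f * (⇑d)^[(i + j - n).toNat] g) else 0 := by
  rw [pdoMul_mono_left]
  by_cases hc : 0 ≤ i + j - n
  · rw [if_pos hc, finsum_eq_single _ ((i + j - n).toNat)]
    · have hj : n - i + ((i + j - n).toNat : ℤ) = j := by omega
      simp only [mono, if_pos hj]
    · intro r hr
      have hj : ¬ (n - i + (r:ℤ) = j) := by intro he; apply hr; omega
      simp only [mono, if_neg hj, d_iter_zero, mul_zero, smul_zero]
  · rw [if_neg hc]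
    apply finsum_eq_zero_of_forall_eq_zero
    intro r
    have hj : ¬ (n - i + (r:ℤ) = j) := by intro he; omega
    simp only [mono, if_neg hj, d_iter_zero, mul_zero, smul_zero]

end pdoLemmas

/-- the generalized Leibniz product is associative:
`(f∂^i · g∂^j) · h∂^k = f∂^i · (g∂^j · h∂^k)` for all `f,g,h ∈ A` and `i,j,k ∈ ℤ`. -/
theorem pdoMul_assoc {A : Type*} [CommRing A] [Algebra ℚ A]
    (d : Derivation ℚ A A) (f g h : A) (i j k : ℤ) :
    pdoMul (⇑d) (pdoMul (⇑d) (mono f i) (mono g j)) (mono h k)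
      = pdoMul (⇑d) (mono f i) (pdoMul (⇑d) (mono g j) (mono h k)) := by
  funext n
  rw [pdoMul_mono_right, pdoMul_mono_left]
  by_cases hN : 0 ≤ i + j + k - n
  case neg =>
    -- both sides are zero
    have hL : ∑ᶠ m : ℤ, (if 0 ≤ m + k - n then
        dbinom m (m + k - n).toNat •
          (pdoMul (⇑d) (mono f i) (mono g j) m * (⇑d)^[(m + k - n).toNat] h) else 0) = 0 := by
      apply finsum_eq_zero_of_forall_eq_zero
      intro m
      by_cases hc : 0 ≤ m + k - n
      · rw [if_pos hc, pdoMul_mono_mono]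
        have : ¬ (0 ≤ i + j - m) := by omega
        rw [if_neg this, zero_mul, smul_zero]
      · rw [if_neg hc]
    have hR : ∑ᶠ r : ℕ, dbinom i r •
        (f * (⇑d)^[r] (pdoMul (⇑d) (mono g j) (mono h k) (n - i + r))) = 0 := by
      apply finsum_eq_zero_of_forall_eq_zero
      intro r
      rw [pdoMul_mono_mono]
      have : ¬ (0 ≤ j + k - (n - i + r)) := by omega
      rw [if_neg this, d_iter_zero, mul_zero, smul_zero]
    rw [hL, hR]
  case pos =>
    set M : ℕ := (i + j + k - n).toNat with hM
    have hMz : (M : ℤ) = i + j + k - n := Int.toNat_of_nonneg hN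
    -- the common value
    set T : A := ∑ s ∈ range (M+1),
      (dbinom i s * dbinom (i + j - s) (M - s)) • (f * ((⇑d)^[s] g * (⇑d)^[M - s] h)) with hT
    -- LHS = T
    have hL : ∑ᶠ m : ℤ, (if 0 ≤ m + k - n then
        dbinom m (m + k - n).toNat •
          (pdoMul (⇑d) (mono f i) (mono g j) m * (⇑d)^[(m + k - n).toNat] h) else 0) = T := by
      have hsupp : (Function.support fun m : ℤ => if 0 ≤ m + k - n then
          dbinom m (m + k - n).toNat •
            (pdoMul (⇑d) (mono f i) (mono g j) m * (⇑d)^[(m + k - n).toNat] h) else 0)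
          ⊆ ↑(Finset.Icc (n - k) (i + j)) := by
        intro m hm
        simp only [Function.mem_support] at hm
        by_cases hc : 0 ≤ m + k - n
        · rw [if_pos hc, pdoMul_mono_mono] at hm
          by_cases hc2 : 0 ≤ i + j - m
          · simp only [Finset.coe_Icc, Set.mem_Icc]
            omega
          · rw [if_neg hc2, zero_mul, smul_zero] at hm
            exact absurd rfl hm
        · rw [if_neg hc] at hm
          exact absurd rfl hm
      rw [finsum_eq_finset_sum_of_support_subset _ hsupp, hT]
      apply Finset.sum_nbij' (fun m => (i + j - m).toNat) (fun s => i + j - (s : ℤ))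
      · intro m hm
        simp only [Finset.mem_Icc] at hm
        simp only [Finset.mem_range]
        omega
      · intro s hs
        simp only [Finset.mem_range] at hs
        simp only [Finset.mem_Icc]
        omega
      · intro m hm
        simp only [Finset.mem_Icc] at hm
        omega
      · intro s hs
        simp only [Finset.mem_range] at hs
        omega
      · intro m hm
        simp only [Finset.mem_Icc] at hm
        have hc : 0 ≤ m + k - n := by omega
        rw [if_pos hc, pdoMul_mono_mono]
        have hc2 : 0 ≤ i + j - m := by omega
        rw [if_pos hc2]
        have e1 : (m + k - n).toNat = M - (i + j - m).toNat := by omega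
        have e2 : (m : ℤ) = i + j - ((i + j - m).toNat : ℤ) := by omega
        rw [e1, smul_mul_assoc, smul_smul, mul_comm (dbinom m _), ← e2]
        congr 1
        ring
    rw [hL]
    -- RHS = T
    have hsupp2 : (Function.support fun r : ℕ => dbinom i r •
        (f * (⇑d)^[r] (pdoMul (⇑d) (mono g j) (mono h k) (n - i + r))))
        ⊆ ↑(Finset.range (M+1)) := by
      intro r hr
      simp only [Function.mem_support] at hr
      by_contra hrM
      simp only [Finset.coe_range, Set.mem_Iio, not_lt] at hrM
      rw [pdoMul_mono_mono] at hr
      have : ¬ (0 ≤ j + k - (n - i + r)) := by omega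
      rw [if_neg this, d_iter_zero, mul_zero, smul_zero] at hr
      exact absurd rfl hr
    rw [finsum_eq_finset_sum_of_support_subset _ hsupp2]
    have hterm : ∀ r ∈ range (M+1),
        dbinom i r • (f * (⇑d)^[r] (pdoMul (⇑d) (mono g j) (mono h k) (n - i + r)))
          = ∑ s ∈ range (M+1),
              (dbinom i r * dbinom j (M - r) * (r.choose s : ℚ))
                • (f * ((⇑d)^[s] g * (⇑d)^[M - s] h)) := by
      intro r hr
      have hrM : r ≤ M := by simpa [Nat.lt_succ_iff] using Finset.mem_range.mp hr
      rw [pdoMul_mono_mono]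
      have hc : 0 ≤ j + k - (n - i + r) := by omega
      rw [if_pos hc]
      have e1 : (j + k - (n - i + r)).toNat = M - r := by omega
      rw [e1, d_iter_smul, d_iter_mul]
      have e2 : ∀ s ∈ range (r+1),
          ((r.choose s : ℚ)) • ((⇑d)^[s] g * (⇑d)^[r - s] ((⇑d)^[M - r] h))
            = ((r.choose s : ℚ)) • ((⇑d)^[s] g * (⇑d)^[M - s] h) := by
        intro s hs
        have hsr : s ≤ r := by simpa [Nat.lt_succ_iff] using Finset.mem_range.mp hs
        rw [← Function.iterate_add_apply]
        have : r - s + (M - r) = M - s := by omega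
        rw [this]
      rw [Finset.sum_congr rfl e2]
      -- now push smuls inside
      rw [Finset.smul_sum, Finset.mul_sum, Finset.smul_sum]
      have e3 : ∀ s ∈ range (r+1),
          dbinom i r • (f * (dbinom j (M - r) • ((r.choose s : ℚ) •
              ((⇑d)^[s] g * (⇑d)^[M - s] h))))
            = (dbinom i r * dbinom j (M - r) * (r.choose s : ℚ))
                • (f * ((⇑d)^[s] g * (⇑d)^[M - s] h)) := by
        intro s hs
        rw [mul_smul_comm, mul_smul_comm, smul_smul, smul_smul]
      rw [Finset.sum_congr rfl e3]
      -- extend the sum from range (r+1) to range (M+1)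
      apply Finset.sum_subset
      · intro s hs
        simp only [Finset.mem_range] at hs ⊢
        omega
      · intro s _ hs
        simp only [Finset.mem_range, Nat.lt_succ_iff, not_le] at hs
        rw [Nat.choose_eq_zero_of_lt hs]
        simp
    rw [Finset.sum_congr rfl hterm, Finset.sum_comm, hT]
    apply Finset.sum_congr rfl
    intro s hs
    have hsM : s ≤ M := by simpa [Nat.lt_succ_iff] using Finset.mem_range.mp hs
    rw [← Finset.sum_smul, key_identity hsM]
end

section
/- Let g be a Lie algebra and R: g → g a linear map satisfying the modified Yang–Baxter equation [R(X), R(Y)] − R([R(X),Y] + [X,R(Y)]) = −[X,Y] for all X, Y ∈ g. Then the bracket [X,Y]_R := [R(X),Y] + [X,R(Y)] satisfies the Jacobi identity, so it defines a second Lie algebra structure on g. -/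
/-- The bracket `[X,Y]_R = [R(X),Y] + [X,R(Y)]` associated to a linear map `R`. -/
def brR {k g : Type*} [CommRing k] [LieRing g] [LieAlgebra k g]
    (R : g →ₗ[k] g) (X Y : g) : g :=
  ⁅R X, Y⁆ + ⁅X, R Y⁆

/-- if `R` satisfies the modified Yang–Baxter equation
`[R(X),R(Y)] − R([X,Y]_R) = −[X,Y]`, then `[ , ]_R` satisfies the Jacobi
identity (it is clearly bilinear and antisymmetric, hence a Lie bracket). -/
theorem brR_jacobi {k g : Type*} [CommRing k] [LieRing g] [LieAlgebra k g]
    (R : g →ₗ[k] g)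
    (hYB : ∀ X Y : g, ⁅R X, R Y⁆ - R (brR R X Y) = -⁅X, Y⁆) :
    ∀ X Y Z : g,
      brR R (brR R X Y) Z + brR R (brR R Y Z) X + brR R (brR R Z X) Y = 0 := by
  have j : ∀ a b c : g, ⁅⁅a, b⁆, c⁆ + ⁅⁅b, c⁆, a⁆ + ⁅⁅c, a⁆, b⁆ = 0 := by
    intro a b c
    have h := lie_jacobi c a b
    rw [← lie_skew c ⁅a, b⁆, ← lie_skew a ⁅b, c⁆, ← lie_skew b ⁅c, a⁆] at h
    have h2 : -(⁅⁅a, b⁆, c⁆ + ⁅⁅b, c⁆, a⁆ + ⁅⁅c, a⁆, b⁆) = 0 := by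
      rw [neg_add, neg_add]; exact h
    exact neg_eq_zero.mp h2
  have hR : ∀ X Y : g, R (⁅R X, Y⁆ + ⁅X, R Y⁆) = ⁅R X, R Y⁆ + ⁅X, Y⁆ := by
    intro X Y
    have h := hYB X Y
    rw [sub_eq_iff_eq_add] at h
    rw [show R (⁅R X, Y⁆ + ⁅X, R Y⁆) = R (brR R X Y) from rfl, h]; abel
  intro X Y Z
  simp only [brR, hR, add_lie]
  calc ⁅⁅R X, R Y⁆, Z⁆ + ⁅⁅X, Y⁆, Z⁆ + (⁅⁅R X, Y⁆, R Z⁆ + ⁅⁅X, R Y⁆, R Z⁆) +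
      (⁅⁅R Y, R Z⁆, X⁆ + ⁅⁅Y, Z⁆, X⁆ + (⁅⁅R Y, Z⁆, R X⁆ + ⁅⁅Y, R Z⁆, R X⁆)) +
      (⁅⁅R Z, R X⁆, Y⁆ + ⁅⁅Z, X⁆, Y⁆ + (⁅⁅R Z, X⁆, R Y⁆ + ⁅⁅Z, R X⁆, R Y⁆))
      = (⁅⁅X, Y⁆, Z⁆ + ⁅⁅Y, Z⁆, X⁆ + ⁅⁅Z, X⁆, Y⁆) +
        (⁅⁅R X, R Y⁆, Z⁆ + ⁅⁅R Y, Z⁆, R X⁆ + ⁅⁅Z, R X⁆, R Y⁆) +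
        (⁅⁅R Y, R Z⁆, X⁆ + ⁅⁅R Z, X⁆, R Y⁆ + ⁅⁅X, R Y⁆, R Z⁆) +
        (⁅⁅R Z, R X⁆, Y⁆ + ⁅⁅R X, Y⁆, R Z⁆ + ⁅⁅Y, R Z⁆, R X⁆) := by abel
    _ = 0 := by
        rw [j X Y Z, j (R X) (R Y) Z, j (R Y) (R Z) X, j (R Z) (R X) Y]; abel
end

section
/- With the inner product ⟨(X,X̂),(Y,Ŷ)⟩ = ∫ res(XY) dx + ∫ res(X̂Ŷ) dx on D = D^- × D^+, the R-matrix R(X,X̂) = (X_+ − X_- − 2X̂_-, X̂_+ − X̂_- + 2X_+) is anti-symmetric: ⟨R(𝐗), 𝐘⟩ = −⟨𝐗, R(𝐘)⟩ for all 𝐗, 𝐘 ∈ D. -/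
/-- with the inner product
`⟨(X,X̂),(Y,Ŷ)⟩ = ∫ res(XY) dx + ∫ res(X̂Ŷ) dx` on `D = D⁻ × D⁺` (modeled by a
symmetric bilinear form `B` with values in `A/∂(A)` satisfying the adjointness
properties of the residue pairing with respect to the projections
`pp = ( )₊`, `pm = ( )₋`), the `R`-matrix
`R(X,X̂) = (X₊ − X₋ − 2X̂₋, X̂₊ − X̂₋ + 2X₊)` is anti-symmetric:
`⟨R(𝐗), 𝐘⟩ = −⟨𝐗, R(𝐘)⟩`. -/
theorem Rmatrix_antisymmetric {k D W : Type*} [CommRing k]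
    [Ring D] [Algebra k D] [AddCommGroup W] [Module k W]
    (B : D →ₗ[k] D →ₗ[k] W)
    (hsym : ∀ X Y : D, B X Y = B Y X)
    (pp pm : D →ₗ[k] D)
    (hsum : ∀ X, pp X + pm X = X)
    (hadj₁ : ∀ X Y : D, B (pp X) Y = B (pp X) (pm Y))
    (hadj₂ : ∀ X Y : D, B (pm X) Y = B (pm X) (pp Y)) :
    ∀ X Xh Y Yh : D,
      B (pp X - pm X - 2 • pm Xh) Y + B (pp Xh - pm Xh + 2 • pp X) Yh
        = -(B X (pp Y - pm Y - 2 • pm Yh) + B Xh (pp Yh - pm Yh + 2 • pp Y)) := by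
  have h1 : ∀ X Y : D, B X (pp Y) = B (pm X) (pp Y) := by
    intro X Y
    rw [hsym, hadj₁, hsym]
  have h2 : ∀ X Y : D, B X (pm Y) = B (pp X) (pm Y) := by
    intro X Y
    rw [hsym, hadj₂, hsym]
  intro X Xh Y Yh
  simp only [two_smul, map_sub, map_add, LinearMap.sub_apply, LinearMap.add_apply]
  rw [hadj₁ X Y, hadj₂ X Y, hadj₂ Xh Y, hadj₁ Xh Yh, hadj₂ Xh Yh, hadj₁ X Yh,
    h1 X Y, h2 X Y, h2 X Yh, h1 Xh Yh, h2 Xh Yh, h1 Xh Y,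
    hsym (pm X) (pp Y), hsym (pm Xh) (pp Y), hsym (pm Xh) (pp Yh)]
  abel
end
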